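/- Let k be a natural number and x, r positive real numbers. Then the series Σ_{n=0}^∞ (r^{2n} / n!) Φ(-n, 1+k; x²) converges and equals k! (x r)^{-k} e^{r²} J_k(2 x r). -/

import Mathlib

set_option maxHeartbeats 1000000


/-- Terminating Kummer function Φ(-p, 1+k; t)
    = Σ_{j=0}^{p} (-1)^j (choose p j) t^j / (k+1)_j. -/
noncomputable def kummerPhi (p k : ℕ) (t : ℝ) : ℝ :=
  ∑ j ∈ Finset.range (p + 1),
    (-1 : ℝ) ^ j * (p.choose j : ℝ) * t ^ j / ((ascPochhammer ℝ j).eval ((k : ℝ) + 1))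

/-- Bessel function of the first kind of natural order:
    J_k(x) = Σ_{j=0}^∞ (-1)^j (x/2)^{k+2j} / (j! (k+j)!). -/
noncomputable def besselJ (k : ℕ) (x : ℝ) : ℝ :=
  ∑' j : ℕ,
    (-1 : ℝ) ^ j * (x / 2) ^ (k + 2 * j) /
      ((Nat.factorial j : ℝ) * (Nat.factorial (k + j) : ℝ))

lemma asc_eval_eq (k j : ℕ) :
    (ascPochhammer ℝ j).eval ((k : ℝ) + 1) =
      (Nat.factorial (k + j) : ℝ) / (Nat.factorial k : ℝ) := by
  have h := factorial_mul_ascPochhammer ℝ k j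
  have hk : (Nat.factorial k : ℝ) ≠ 0 := Nat.cast_ne_zero.mpr k.factorial_ne_zero
  field_simp
  linarith [h]

theorem kummer_sum_to_besselJ (k : ℕ) (x r : ℝ) (hx : 0 < x) (hr : 0 < r) :
    HasSum (fun n : ℕ => r ^ (2 * n) / (Nat.factorial n : ℝ) * kummerPhi n k (x ^ 2))
      ((Nat.factorial k : ℝ) / (x * r) ^ k * Real.exp (r ^ 2) * besselJ k (2 * x * r)) := by
  have hxr : 0 < x * r := mul_pos hx hr
  -- Bessel series terms
  set c : ℕ → ℝ := fun j =>
    (-1 : ℝ) ^ j * (2 * x * r / 2) ^ (k + 2 * j) /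
      ((Nat.factorial j : ℝ) * (Nat.factorial (k + j) : ℝ)) with hc
  set f : ℕ → ℝ := fun j => (Nat.factorial k : ℝ) / (x * r) ^ k * c j with hf
  set g : ℕ → ℝ := fun m => (r ^ 2) ^ m / (Nat.factorial m : ℝ) with hg
  -- norm bounds
  have hceq : ∀ j, c j = (-1 : ℝ) ^ j * (x * r) ^ (k + 2 * j) /
      ((Nat.factorial j : ℝ) * (Nat.factorial (k + j) : ℝ)) := by
    intro j
    have h2 : 2 * x * r / 2 = x * r := by ring
    simp only [hc, h2]
  have hcnorm : Summable fun j => ‖c j‖ := by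
    refine Summable.of_nonneg_of_le (fun j => norm_nonneg _) (fun j => ?_)
      ((Real.summable_pow_div_factorial ((x * r) ^ 2)).mul_left ((x * r) ^ k))
    ·
      rw [hceq j]
      have h1 : ‖(-1 : ℝ) ^ j * (x * r) ^ (k + 2 * j) /
          ((Nat.factorial j : ℝ) * (Nat.factorial (k + j) : ℝ))‖ =
          (x * r) ^ (k + 2 * j) /
          ((Nat.factorial j : ℝ) * (Nat.factorial (k + j) : ℝ)) := by
        rw [norm_div, norm_mul, norm_pow, norm_neg, norm_one, one_pow, one_mul,
          Real.norm_of_nonneg (by positivity), Real.norm_of_nonneg (by positivity)]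
      rw [h1, pow_add, pow_mul, mul_div_assoc]
      gcongr
      exact le_mul_of_one_le_right (by positivity)
        (by exact_mod_cast Nat.one_le_iff_ne_zero.mpr (k + j).factorial_ne_zero)
  have hcsum : Summable c := hcnorm.of_norm
  have hbessel : HasSum c (besselJ k (2 * x * r)) := by
    rw [besselJ]; exact hcsum.hasSum
  have hfsum : HasSum f ((Nat.factorial k : ℝ) / (x * r) ^ k * besselJ k (2 * x * r)) :=
    hbessel.mul_left _
  have hfnorm : Summable fun j => ‖f j‖ := by
    simpa [hf, norm_mul] using hcnorm.mul_left ‖(Nat.factorial k : ℝ) / (x * r) ^ k‖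
  have hgsum : HasSum g (Real.exp (r ^ 2)) := by
    rw [Real.exp_eq_exp_ℝ]
    exact NormedSpace.expSeries_div_hasSum_exp (r ^ 2)
  have hgnorm : Summable fun m => ‖g m‖ := by
    apply Summable.congr (Real.summable_pow_div_factorial (r ^ 2))
    intro m
    rw [Real.norm_of_nonneg (by positivity)]
  have hmain := hasSum_sum_range_mul_of_summable_norm hfnorm hgnorm
  rw [hfsum.tsum_eq, hgsum.tsum_eq] at hmain
  have heq : (fun n : ℕ => r ^ (2 * n) / (Nat.factorial n : ℝ) * kummerPhi n k (x ^ 2)) =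
      fun n => ∑ j ∈ Finset.range (n + 1), f j * g (n - j) := by
    funext n
    rw [kummerPhi, Finset.mul_sum]
    apply Finset.sum_congr rfl
    intro j hj
    have hjn : j ≤ n := Nat.lt_succ_iff.mp (Finset.mem_range.mp hj)
    simp only [hf, hg]
    rw [hceq j, asc_eval_eq, Nat.cast_choose ℝ hjn]
    have hk0 : (Nat.factorial k : ℝ) ≠ 0 := Nat.cast_ne_zero.mpr k.factorial_ne_zero
    have hj0 : (Nat.factorial j : ℝ) ≠ 0 := Nat.cast_ne_zero.mpr j.factorial_ne_zero
    have hn0 : (Nat.factorial n : ℝ) ≠ 0 := Nat.cast_ne_zero.mpr n.factorial_ne_zero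
    have hnj0 : (Nat.factorial (n - j) : ℝ) ≠ 0 := Nat.cast_ne_zero.mpr (n - j).factorial_ne_zero
    have hkj0 : (Nat.factorial (k + j) : ℝ) ≠ 0 := Nat.cast_ne_zero.mpr (k + j).factorial_ne_zero
    have hrn : r ^ (2 * n) = r ^ (2 * j) * r ^ (2 * (n - j)) := by
      rw [← pow_add]; congr 1; omega
    have hr2 : (r ^ 2) ^ (n - j) = r ^ (2 * (n - j)) := by rw [← pow_mul]
    have hx2 : (x ^ 2) ^ j = x ^ (2 * j) := by rw [← pow_mul]
    have hxrp : (x * r) ^ (k + 2 * j) = x ^ (2 * j) * r ^ (2 * j) * (x * r) ^ k := by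
      rw [pow_add, mul_pow, pow_mul, ← pow_mul]; ring
    have hxrk : (x * r) ^ k ≠ 0 := by positivity
    rw [hrn, hr2, hx2, hxrp]
    field_simp
  rw [heq, mul_right_comm]
  exact hmain
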